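/- arXiv:1001.2223 — 6 statements merged into one kernel-verified Lean document; each statement's English description precedes it below -/
import Mathlib

section
/- Let (T^α, ħ) be a unital matrix regularization, let f ∈ C^∞(Σ) be nowhere vanishing, and suppose {f̂_α} converges to f. If each f̂_α is invertible and ‖f̂_α^{-1}‖ is uniformly bounded in α, then {f̂_α^{-1}} converges to 1/f. -/
open MeasureTheory Filter Matrix Real
open scoped Topology Matrix.Norms.L2Operator

noncomputable section

/-- A matrix regularization of a compact surface `S` with symplectic volume measure `μ`
and Poisson bracket `pb`. -/
structure MatrixRegularization (S : Type*) [TopologicalSpace S] [CompactSpace S]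
    [MeasurableSpace S] (μ : Measure S)
    (pb : C(S, ℝ) → C(S, ℝ) → C(S, ℝ)) where
  Ndim : ℕ → ℕ
  Ndim_pos : ∀ α, 0 < Ndim α
  Ndim_mono : StrictMono Ndim
  T : ∀ α : ℕ, C(S, ℝ) →ₗ[ℝ] Matrix (Fin (Ndim α)) (Fin (Ndim α)) ℂ
  T_isHermitian : ∀ α f, (T α f).IsHermitian
  hbar : ℕ → ℝ
  hbar_pos : ∀ N, 0 < hbar N
  hbar_decr : ∀ m n : ℕ, m ≤ n → hbar n ≤ hbar m
  hbar_bdd : ∃ c : ℝ, Tendsto (fun N : ℕ => (N : ℝ) * hbar N) atTop (𝓝 c)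
  norm_lim : ∀ f, ∃ L : ℝ, Tendsto (fun α => ‖T α f‖) atTop (𝓝 L)
  mul_approx : ∀ f h, Tendsto (fun α => ‖T α (f * h) - T α f * T α h‖) atTop (𝓝 0)
  comm_approx : ∀ f h, Tendsto (fun α =>
      ‖((Complex.I * (hbar (Ndim α) : ℂ))⁻¹) • ⁅T α f, T α h⁆ - T α (pb f h)‖) atTop (𝓝 0)
  trace_approx : ∀ f, Tendsto (fun α => (2 * (π : ℂ) * (hbar (Ndim α) : ℂ)) * (T α f).trace)
      atTop (𝓝 ((∫ x, f x ∂μ : ℝ) : ℂ))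

namespace MatrixRegularization

variable {S : Type*} [TopologicalSpace S] [CompactSpace S] [MeasurableSpace S]
  {μ : Measure S} {pb : C(S, ℝ) → C(S, ℝ) → C(S, ℝ)}

/-- A sequence of matrices converges to the function `f`. -/
def Converges (R : MatrixRegularization S μ pb)
    (fhat : ∀ α : ℕ, Matrix (Fin (R.Ndim α)) (Fin (R.Ndim α)) ℂ) (f : C(S, ℝ)) : Prop :=
  Tendsto (fun α => ‖fhat α - R.T α f‖) atTop (𝓝 0)

/-- A unital matrix regularization. -/
def Unital (R : MatrixRegularization S μ pb) : Prop :=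
  Tendsto (fun α => ‖(1 : Matrix (Fin (R.Ndim α)) (Fin (R.Ndim α)) ℂ) - R.T α 1‖) atTop (𝓝 0)

end MatrixRegularization

/-! Writing `ĝ = T(1/f)`, one has `f̂⁻¹ - ĝ = f̂⁻¹ (1 - f̂ ĝ)`, and `1 - f̂ ĝ` tends to zero because
`T(f) T(1/f)` approximates `T(1) ≈ 1` and `f̂ ≈ T(f)` while `‖T(1/f)‖` stays bounded. The uniform
bound on `‖f̂⁻¹‖` then carries this over to `f̂⁻¹ - ĝ`. -/

theorem norm_sub_le_of_mul_eq_one {A : Type*} [NormedRing A] {a b s t : A} (hba : b * a = 1) :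
    ‖b - t‖ ≤ ‖b‖ * (‖1 - s * t‖ + ‖a - s‖ * ‖t‖) := by
  have hfactor : b - t = b * ((1 - s * t) - (a - s) * t) := by
    rw [sub_mul, sub_sub_sub_cancel_right, mul_sub, mul_one, ← mul_assoc, hba, one_mul]
  rw [hfactor]
  refine (norm_mul_le _ _).trans (mul_le_mul_of_nonneg_left ?_ (norm_nonneg b))
  exact (norm_sub_le _ _).trans (by gcongr; exact norm_mul_le _ _)

namespace MatrixRegularization

variable {S : Type*} [TopologicalSpace S] [CompactSpace S] [MeasurableSpace S]
  {μ : Measure S} {pb : C(S, ℝ) → C(S, ℝ) → C(S, ℝ)}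

theorem tendsto_norm_one_sub_T_mul_T (R : MatrixRegularization S μ pb) (hU : R.Unital)
    {f g : C(S, ℝ)} (hfg : f * g = 1) :
    Tendsto (fun α => ‖(1 : Matrix (Fin (R.Ndim α)) (Fin (R.Ndim α)) ℂ) - R.T α f * R.T α g‖)
      atTop (𝓝 0) := by
  have hsplit : ∀ α, ‖(1 : Matrix (Fin (R.Ndim α)) (Fin (R.Ndim α)) ℂ) - R.T α f * R.T α g‖ ≤
      ‖(1 : Matrix (Fin (R.Ndim α)) (Fin (R.Ndim α)) ℂ) - R.T α 1‖
        + ‖R.T α (f * g) - R.T α f * R.T α g‖ := fun α => by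
    rw [hfg]
    exact norm_sub_le_norm_sub_add_norm_sub _ _ _
  exact squeeze_zero (fun _ => norm_nonneg _) hsplit (by simpa using hU.add (R.mul_approx f g))

end MatrixRegularization

theorem inverse_converges_general {S : Type*} [TopologicalSpace S] [CompactSpace S]
    [MeasurableSpace S] {μ : Measure S}
    {pb : C(S, ℝ) → C(S, ℝ) → C(S, ℝ)}
    (R : MatrixRegularization S μ pb) (hU : R.Unital)
    (f g : C(S, ℝ)) (hg : ∀ x, f x * g x = 1)
    (fhat : ∀ α : ℕ, Matrix (Fin (R.Ndim α)) (Fin (R.Ndim α)) ℂ)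
    (hconv : R.Converges fhat f)
    (hinv : ∀ α, IsUnit (fhat α))
    (hbdd : ∃ C : ℝ, ∀ α, ‖(fhat α)⁻¹‖ ≤ C) :
    R.Converges (fun α => (fhat α)⁻¹) g := by
  obtain ⟨C, hC⟩ := hbdd
  obtain ⟨L, hL⟩ := R.norm_lim g
  have happrox := R.tendsto_norm_one_sub_T_mul_T hU (ContinuousMap.ext hg)
  have hbound : ∀ α, ‖(fhat α)⁻¹ - R.T α g‖ ≤
      C * (‖(1 : Matrix (Fin (R.Ndim α)) (Fin (R.Ndim α)) ℂ) - R.T α f * R.T α g‖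
        + ‖fhat α - R.T α f‖ * ‖R.T α g‖) := fun α =>
    (norm_sub_le_of_mul_eq_one (nonsing_inv_mul _ ((isUnit_iff_isUnit_det _).mp (hinv α)))).trans
      (mul_le_mul_of_nonneg_right (hC α) (by positivity))
  have hlim := tendsto_const_nhds (x := C) |>.mul (happrox.add (hconv.mul hL))
  rw [zero_mul, add_zero, mul_zero] at hlim
  exact squeeze_zero (fun _ => norm_nonneg _) hbound hlim

/-- inverses of a converging sequence converge to `1/f`. -/
theorem inverse_converges {S : Type*} [TopologicalSpace S] [CompactSpace S]
    [MeasurableSpace S] {μ : Measure S} [IsFiniteMeasure μ]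
    {pb : C(S, ℝ) → C(S, ℝ) → C(S, ℝ)}
    (R : MatrixRegularization S μ pb) (hU : R.Unital)
    (f g : C(S, ℝ)) (hf : ∀ x, f x ≠ 0) (hg : ∀ x, f x * g x = 1)
    (fhat : ∀ α : ℕ, Matrix (Fin (R.Ndim α)) (Fin (R.Ndim α)) ℂ)
    (hconv : R.Converges fhat f)
    (hinv : ∀ α, IsUnit (fhat α))
    (hbdd : ∃ C : ℝ, ∀ α, ‖(fhat α)⁻¹‖ ≤ C) :
    R.Converges (fun α => (fhat α)⁻¹) g :=
  inverse_converges_general R hU f g hg fhat hconv hinv hbdd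
end
end

section
/- Let (T^α, ħ) be a matrix regularization of (Σ, ω) with Σ a compact closed orientable surface of Gaussian curvature K, let {K̂_α} be a matrix sequence converging to K, and let {γ̂_α} converge to γ = √g/ρ (where ω = ρ du¹∧du² and g is the determinant of the induced metric). Then the sequence χ̂_α := ħ_α Tr(γ̂_α K̂_α) converges to the Euler characteristic χ(Σ) of Σ. -/
open MeasureTheory Filter Matrix Real
open scoped Topology Matrix.Norms.L2Operator

noncomputable section

/-! Products of convergent matrix sequences converge to the product of the limits, and
`2πħ Tr` of a sequence converging to `f` tends to `∫ f ω` because the error is at most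
`2π N ħ(N)` times an operator norm tending to zero. Applied to `γ̂ K̂ → γ K`, the classical
Gauss–Bonnet theorem `∫ K γ ω = 2πχ` finishes the proof. -/

namespace Matrix

variable {𝕜 m n : Type*} [RCLike 𝕜] [Fintype m] [Fintype n] [DecidableEq n]

theorem norm_apply_le_l2_opNorm (A : Matrix m n 𝕜) (i : m) (j : n) : ‖A i j‖ ≤ ‖A‖ := by
  have hcol := A.l2_opNorm_mulVec (EuclideanSpace.single j 1)
  rw [PiLp.norm_single, norm_one, mul_one] at hcol
  refine le_trans (le_of_eq ?_) ((PiLp.norm_apply_le _ i).trans hcol)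
  simp [EuclideanSpace.single, mulVec_single]

theorem norm_trace_le_card_mul_l2_opNorm (A : Matrix n n 𝕜) :
    ‖A.trace‖ ≤ Fintype.card n * ‖A‖ :=
  calc ‖A.trace‖ ≤ ∑ i, ‖A i i‖ := norm_sum_le _ _
    _ ≤ ∑ _i : n, ‖A‖ := Finset.sum_le_sum fun i _ => A.norm_apply_le_l2_opNorm i i
    _ = Fintype.card n * ‖A‖ := by simp

end Matrix

namespace MatrixRegularization

variable {S : Type*} [TopologicalSpace S] [CompactSpace S] [MeasurableSpace S]
  {μ : Measure S} {pb : C(S, ℝ) → C(S, ℝ) → C(S, ℝ)} (R : MatrixRegularization S μ pb)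

theorem tendsto_hbar_mul_trace_zero {A : ∀ α : ℕ, Matrix (Fin (R.Ndim α)) (Fin (R.Ndim α)) ℂ}
    (hA : Tendsto (fun α => ‖A α‖) atTop (𝓝 0)) :
    Tendsto (fun α => (R.hbar (R.Ndim α) : ℂ) * (A α).trace) atTop (𝓝 0) := by
  obtain ⟨c, hc⟩ := R.hbar_bdd
  have hNhbar := hc.comp R.Ndim_mono.tendsto_atTop
  refine squeeze_zero_norm (fun α => ?_) (by simpa using hNhbar.mul hA)
  have hbar_nonneg := (R.hbar_pos (R.Ndim α)).le
  calc ‖(R.hbar (R.Ndim α) : ℂ) * (A α).trace‖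
      = R.hbar (R.Ndim α) * ‖(A α).trace‖ := by
        rw [norm_mul, Complex.norm_real, Real.norm_of_nonneg hbar_nonneg]
    _ ≤ R.hbar (R.Ndim α) * (R.Ndim α * ‖A α‖) := by
        simpa using mul_le_mul_of_nonneg_left (A α).norm_trace_le_card_mul_l2_opNorm hbar_nonneg
    _ = (fun N : ℕ => (N : ℝ) * R.hbar N) (R.Ndim α) * ‖A α‖ := by ring

variable {R}

theorem Converges.mul {fhat hhat : ∀ α : ℕ, Matrix (Fin (R.Ndim α)) (Fin (R.Ndim α)) ℂ}
    {f h : C(S, ℝ)} (hf : R.Converges fhat f) (hh : R.Converges hhat h) :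
    R.Converges (fun α => fhat α * hhat α) (f * h) := by
  obtain ⟨Lf, hLf⟩ := R.norm_lim f
  obtain ⟨Lh, hLh⟩ := R.norm_lim h
  have hbound : ∀ α, ‖fhat α * hhat α - R.T α (f * h)‖ ≤
      ‖fhat α - R.T α f‖ * (‖hhat α - R.T α h‖ + ‖R.T α h‖)
        + ‖R.T α f‖ * ‖hhat α - R.T α h‖ + ‖R.T α (f * h) - R.T α f * R.T α h‖ := by
    intro α
    have hsplit : fhat α * hhat α - R.T α (f * h) =
        (fhat α - R.T α f) * hhat α + R.T α f * (hhat α - R.T α h)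
          - (R.T α (f * h) - R.T α f * R.T α h) := by
      noncomm_ring
    have hhat_le : ‖hhat α‖ ≤ ‖hhat α - R.T α h‖ + ‖R.T α h‖ := norm_le_norm_sub_add _ _
    rw [hsplit]
    refine (norm_sub_le _ _).trans (add_le_add_left ((norm_add_le _ _).trans ?_) _)
    gcongr
    · exact (norm_mul_le _ _).trans (by gcongr)
    · exact norm_mul_le _ _
  refine squeeze_zero (fun α => norm_nonneg _) hbound ?_
  simpa using ((Tendsto.mul hf (hh.add hLh)).add (hLf.mul hh)).add (R.mul_approx f h)

theorem Converges.tendsto_trace {fhat : ∀ α : ℕ, Matrix (Fin (R.Ndim α)) (Fin (R.Ndim α)) ℂ}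
    {f : C(S, ℝ)} (hf : R.Converges fhat f) :
    Tendsto (fun α => 2 * (π : ℂ) * R.hbar (R.Ndim α) * (fhat α).trace) atTop
      (𝓝 ((∫ x, f x ∂μ : ℝ) : ℂ)) := by
  have hdiff := (R.tendsto_hbar_mul_trace_zero hf).const_mul (2 * (π : ℂ))
  rw [mul_zero] at hdiff
  simpa [trace_sub, mul_sub, mul_assoc] using (R.trace_approx f).add hdiff

end MatrixRegularization

theorem discrete_gauss_bonnet_general {S : Type*} [TopologicalSpace S] [CompactSpace S]
    [MeasurableSpace S] {μ : Measure S}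
    {pb : C(S, ℝ) → C(S, ℝ) → C(S, ℝ)}
    (R : MatrixRegularization S μ pb)
    (K γ : C(S, ℝ)) (χ : ℤ)
    (hGaussBonnet : ∫ x, (K * γ) x ∂μ = 2 * π * (χ : ℝ))
    (Khat γhat : ∀ α : ℕ, Matrix (Fin (R.Ndim α)) (Fin (R.Ndim α)) ℂ)
    (hK : R.Converges Khat K) (hγ : R.Converges γhat γ) :
    Tendsto (fun α => (R.hbar (R.Ndim α) : ℂ) * (γhat α * Khat α).trace) atTop
      (𝓝 (χ : ℂ)) := by
  have hTrace := (hγ.mul hK).tendsto_trace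
  rw [mul_comm γ K, hGaussBonnet] at hTrace
  have h2pi : (2 * π : ℂ) ≠ 0 := by simp [Real.pi_ne_zero]
  convert hTrace.const_mul (2 * π : ℂ)⁻¹ using 1
  · ext α
    field_simp
  · push_cast
    field_simp

/-- discrete Gauss–Bonnet. Here `K` is the Gaussian curvature, `γ = √g/ρ`,
`χ` the Euler characteristic, and the classical Gauss–Bonnet theorem reads
`∫ K γ ω = ∫ K √g du dv = 2πχ`. -/
theorem discrete_gauss_bonnet {S : Type*} [TopologicalSpace S] [CompactSpace S]
    [MeasurableSpace S] {μ : Measure S} [IsFiniteMeasure μ]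
    {pb : C(S, ℝ) → C(S, ℝ) → C(S, ℝ)}
    (R : MatrixRegularization S μ pb)
    (K γ : C(S, ℝ)) (χ : ℤ)
    (hGaussBonnet : ∫ x, (K * γ) x ∂μ = 2 * π * (χ : ℝ))
    (Khat γhat : ∀ α : ℕ, Matrix (Fin (R.Ndim α)) (Fin (R.Ndim α)) ℂ)
    (hK : R.Converges Khat K) (hγ : R.Converges γhat γ) :
    Tendsto (fun α => (R.hbar (R.Ndim α) : ℂ) * (γhat α * Khat α).trace) atTop
      (𝓝 (χ : ℂ)) :=
  discrete_gauss_bonnet_general R K γ χ hGaussBonnet Khat γhat hK hγ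
end
end

section
/- For the fuzzy Clifford torus, with normal sequences N_±^1 = X¹, N_±^2 = X², N_±^3 = ±X³, N_±^4 = ±X⁴ and ħ = sin(π/N), the discrete curvature K̂_N := (1/(2ħ²)) Σ_{i,j=1}^4 [X^i, N_+^j][X^j, N_+^i] + (1/(2ħ²)) Σ_{i,j=1}^4 [X^i, N_−^j][X^j, N_−^i] equals the zero matrix; consequently χ̂_N = ħ Tr K̂_N = 0. -/
/-!
The two block commutators `[X¹, X²]` and `[X³, X⁴]` vanish because `g` and `h` are normal (a diagonal
matrix and a permutation matrix). Hence the `N₊`-sum consists of the cross-block terms only, and the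
`N₋`-sum of the same terms with their signs flipped, so the two cancel.
-/

open Matrix

theorem Commute.smul_add_smul_sub {R A : Type*} [Ring A] [SMul R A] [IsScalarTower R A A]
    [SMulCommClass R A A] {a b : A} (hab : Commute a b) (r s : R) :
    Commute (r • (a + b)) (s • (a - b)) :=
  (((Commute.refl a).sub_right hab).add_left (hab.symm.sub_right (Commute.refl b))).smul_left r
    |>.smul_right s

theorem Ring.lie_neg {R : Type*} [NonUnitalNonAssocRing R] (x y : R) : ⁅x, -y⁆ = -⁅x, y⁆ := by
  simp only [lie_def, mul_neg, neg_mul, sub_neg_eq_add, neg_sub]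
  abel

theorem Matrix.commute_conjTranspose_permMatrix {n R : Type*} [Fintype n] [DecidableEq n]
    [NonAssocSemiring R] [StarRing R] (σ : Equiv.Perm n) :
    Commute (σ.permMatrix R)ᴴ (σ.permMatrix R) := by
  rw [conjTranspose_permMatrix, Commute, SemiconjBy, ← permMatrix_mul, ← permMatrix_mul,
    mul_inv_cancel, inv_mul_cancel]

theorem Matrix.of_ite_eq_addRight_one {N : ℕ} [NeZero N] {R : Type*} [Zero R] [One R] :
    Matrix.of (fun i j : Fin N => if j = i + 1 then (1 : R) else 0) =
      (Equiv.addRight (1 : Fin N)).permMatrix R := by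
  ext i j
  simp [eq_comm]

def curvatureSum {ι A : Type*} [Fintype ι] [Ring A] (X N : ι → A) : A :=
  ∑ i, ∑ j, ⁅X i, N j⁆ * ⁅X j, N i⁆

theorem curvatureSum_add_curvatureSum_neg_eq_zero {A : Type*} [Ring A] (X : Fin 4 → A)
    (h01 : Commute (X 0) (X 1)) (h23 : Commute (X 2) (X 3)) :
    curvatureSum X X + curvatureSum X ![X 0, X 1, -X 2, -X 3] = 0 := by
  have hself (i : Fin 4) : ⁅X i, X i⁆ = 0 := (Commute.refl _).lie_eq
  simp only [curvatureSum, Fin.sum_univ_four, Matrix.cons_val, Ring.lie_neg, hself, h01.lie_eq,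
    h01.symm.lie_eq, h23.lie_eq, h23.symm.lie_eq, neg_mul, mul_neg, mul_zero, neg_zero,
    add_zero, zero_add]
  abel

/-- the discrete curvature of the fuzzy Clifford torus vanishes, and hence so does
its discrete Euler characteristic `χ̂_N = ħ Tr K̂_N`. -/
theorem fuzzy_clifford_torus_curvature (N : ℕ) (hN : 0 < N) :
    haveI : NeZero N := ⟨hN.ne'⟩
    ∀ (ω : ℂ) (g h : Matrix (Fin N) (Fin N) ℂ)
      (X Np Nm : Fin 4 → Matrix (Fin N) (Fin N) ℂ) (hbar : ℝ)
      (Khat : Matrix (Fin N) (Fin N) ℂ),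
      ω = Complex.exp (2 * Real.pi * Complex.I / N) →
      g = Matrix.diagonal (fun k : Fin N => ω ^ (k : ℕ)) →
      h = Matrix.of (fun i j : Fin N => if j = i + 1 then (1 : ℂ) else 0) →
      X 0 = (1 / (2 * (Real.sqrt 2 : ℂ))) • (gᴴ + g) →
      X 1 = (Complex.I / (2 * (Real.sqrt 2 : ℂ))) • (gᴴ - g) →
      X 2 = (1 / (2 * (Real.sqrt 2 : ℂ))) • (hᴴ + h) →
      X 3 = (Complex.I / (2 * (Real.sqrt 2 : ℂ))) • (hᴴ - h) →
      Np 0 = X 0 → Np 1 = X 1 → Np 2 = X 2 → Np 3 = X 3 →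
      Nm 0 = X 0 → Nm 1 = X 1 → Nm 2 = -(X 2) → Nm 3 = -(X 3) →
      hbar = Real.sin (Real.pi / N) →
      Khat = (1 / (2 * (hbar : ℂ) ^ 2)) •
          (∑ i : Fin 4, ∑ j : Fin 4, ⁅X i, Np j⁆ * ⁅X j, Np i⁆) +
        (1 / (2 * (hbar : ℂ) ^ 2)) •
          (∑ i : Fin 4, ∑ j : Fin 4, ⁅X i, Nm j⁆ * ⁅X j, Nm i⁆) →
      Khat = 0 ∧ (hbar : ℂ) * Khat.trace = 0 := by
  have : NeZero N := ⟨hN.ne'⟩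
  intro ω g h X Np Nm hbar Khat _ hg hh hX0 hX1 hX2 hX3 hNp0 hNp1 hNp2 hNp3
    hNm0 hNm1 hNm2 hNm3 _ hK
  have hg_normal : Commute gᴴ g := by
    rw [hg, diagonal_conjTranspose]
    exact commute_diagonal _ _
  have hh_normal : Commute hᴴ h := by
    rw [hh, of_ite_eq_addRight_one]
    exact commute_conjTranspose_permMatrix _
  have hNp : Np = X := funext fun i => by fin_cases i <;> assumption
  have hNm : Nm = ![X 0, X 1, -X 2, -X 3] := funext fun i => by fin_cases i <;> assumption
  have hK0 : Khat = 0 := by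
    rw [hK, ← smul_add, hNp, hNm]
    change _ • (curvatureSum X X + curvatureSum X _) = 0
    rw [curvatureSum_add_curvatureSum_neg_eq_zero X
      (by rw [hX0, hX1]; exact hg_normal.smul_add_smul_sub _ _)
      (by rw [hX2, hX3]; exact hh_normal.smul_add_smul_sub _ _), smul_zero]
  exact ⟨hK0, by rw [hK0, trace_zero, mul_zero]⟩
end

section
/- Let f be smooth and define Z, W as N×N matrices with Z diagonal, Z_{kk} = (ħ/2)(N+1−2k), and W having only nonzero entries W_{k,k+1} = w_k (k = 1,…,N−1) with real w_k ≥ 0. Then [Z, W] = ħW, and if w_k² − w_{k−1}² = −2ħ (ff′)((ħ/2)(N+1−2k)) for k = 1,…,N (with w_0 = w_N = 0), then [W, W†] = −2ħ (ff′)(Z), where (ff′)(Z) denotes the diagonal matrix obtained by applying z ↦ f(z)f′(z) to the diagonal entries of Z. -/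
open Matrix
noncomputable section

/-- for the diagonal matrix `Z` with `Z_kk = (ħ/2)(N+1-2k)` and the bidiagonal
matrix `W` with `W_{k,k+1} = w_k`, one has `[Z,W] = ħW`; and if
`w_k² - w_{k-1}² = -2ħ(ff')(z_k)` (with `w_0 = w_N = 0`), then `[W,W†] = -2ħ(ff')(Z)`. -/
theorem axially_symmetric_representation (N : ℕ) (hbar : ℝ) (hpos : 0 < hbar)
    (f : ℝ → ℝ) (hf : ContDiff ℝ (⊤ : ℕ∞) f)
    (w : ℕ → ℝ) (hwnn : ∀ k, 0 ≤ w k) (hw0 : w 0 = 0) (hwN : w N = 0)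
    (Z W : Matrix (Fin N) (Fin N) ℂ)
    (hZ : Z = Matrix.diagonal (fun i : Fin N =>
      ((hbar / 2 * ((N : ℝ) + 1 - 2 * ((i : ℕ) + 1)) : ℝ) : ℂ)))
    (hW : W = Matrix.of (fun i j : Fin N =>
      if (j : ℕ) = (i : ℕ) + 1 then ((w ((i : ℕ) + 1) : ℝ) : ℂ) else 0)) :
    ⁅Z, W⁆ = (hbar : ℂ) • W ∧
    ((∀ k : ℕ, 1 ≤ k → k ≤ N →
        w k ^ 2 - w (k - 1) ^ 2 =
          -2 * hbar * (f (hbar / 2 * ((N : ℝ) + 1 - 2 * k)) *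
            deriv f (hbar / 2 * ((N : ℝ) + 1 - 2 * k)))) →
      ⁅W, Wᴴ⁆ = (-2 * (hbar : ℂ)) • Matrix.diagonal (fun i : Fin N =>
        ((f (hbar / 2 * ((N : ℝ) + 1 - 2 * ((i : ℕ) + 1))) *
          deriv f (hbar / 2 * ((N : ℝ) + 1 - 2 * ((i : ℕ) + 1))) : ℝ) : ℂ))) := by
  subst hZ hW
  refine ⟨?_, ?_⟩
  · ext i j
    simp only [Ring.lie_def, Matrix.sub_apply, Matrix.diagonal_mul, Matrix.mul_diagonal,
      Matrix.of_apply, Matrix.smul_apply, smul_eq_mul]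
    by_cases h : (j : ℕ) = (i : ℕ) + 1
    · rw [if_pos h, h]
      push_cast
      ring
    · rw [if_neg h]; ring
  · intro hrec
    ext i j
    simp only [Ring.lie_def, Matrix.sub_apply, Matrix.mul_apply, Matrix.conjTranspose_apply,
      Matrix.of_apply, Matrix.smul_apply, Matrix.diagonal_apply, smul_eq_mul]
    by_cases hij : i = j
    · subst hij
      rw [if_pos rfl]
      have h1 : (∑ k : Fin N, (if ((k:ℕ) = (i:ℕ)+1) then ((w ((i:ℕ)+1):ℝ):ℂ) else 0) *
          star (if ((k:ℕ) = (i:ℕ)+1) then ((w ((i:ℕ)+1):ℝ):ℂ) else 0))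
          = ((w ((i:ℕ)+1) ^ 2 : ℝ) : ℂ) := by
        by_cases hi : (i:ℕ)+1 < N
        · rw [Finset.sum_eq_single (⟨(i:ℕ)+1, hi⟩ : Fin N)]
          · simp [← Complex.ofReal_pow, sq, Complex.star_def, Complex.conj_ofReal]
          · intro k _ hk
            rw [if_neg, zero_mul]
            simpa [Fin.ext_iff] using hk
          · simp
        · have hN : (i:ℕ)+1 = N := le_antisymm i.2 (not_lt.1 hi)
          have hz : w ((i:ℕ)+1) = 0 := by rw [hN, hwN]
          rw [Finset.sum_eq_zero, hz]
          · simp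
          · intro k _
            rw [if_neg, zero_mul]
            have := k.2; omega
      have h2 : (∑ k : Fin N, star (if ((i:ℕ) = (k:ℕ)+1) then ((w ((k:ℕ)+1):ℝ):ℂ) else 0) *
          (if ((i:ℕ) = (k:ℕ)+1) then ((w ((k:ℕ)+1):ℝ):ℂ) else 0))
          = ((w (i:ℕ) ^ 2 : ℝ) : ℂ) := by
        rcases Nat.eq_zero_or_pos (i:ℕ) with h0 | h0
        · have hz : w (i:ℕ) = 0 := by rw [h0, hw0]
          rw [Finset.sum_eq_zero, hz]
          · simp
          · intro k _
            rw [if_neg (by omega), star_zero, zero_mul]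
        · have hm : (i:ℕ) - 1 < N := by have := i.2; omega
          rw [Finset.sum_eq_single (⟨(i:ℕ)-1, hm⟩ : Fin N)]
          · rw [if_pos (show (i:ℕ) = (i:ℕ) - 1 + 1 by omega)]
            have hsucc : (i:ℕ) - 1 + 1 = (i:ℕ) := by omega
            rw [show ((⟨(i:ℕ)-1, hm⟩ : Fin N) : ℕ) + 1 = (i:ℕ) from hsucc]
            simp [← Complex.ofReal_pow, sq, Complex.star_def, Complex.conj_ofReal]
          · intro k _ hk
            have hk' : (k:ℕ) ≠ (i:ℕ) - 1 := by simpa [Fin.ext_iff] using hk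
            rw [if_neg (by omega), star_zero, zero_mul]
          · simp
      rw [h1, h2]
      have key := hrec ((i:ℕ)+1) (by omega) i.2
      simp only [Nat.add_sub_cancel] at key
      push_cast at key
      exact_mod_cast key
    · rw [if_neg hij]
      have e1 : (∑ k : Fin N, (if ((k:ℕ) = (i:ℕ)+1) then ((w ((i:ℕ)+1):ℝ):ℂ) else 0) *
          star (if ((k:ℕ) = (j:ℕ)+1) then ((w ((j:ℕ)+1):ℝ):ℂ) else 0)) = 0 := by
        apply Finset.sum_eq_zero
        intro k _
        by_cases h1 : (k:ℕ) = (i:ℕ)+1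
        · rw [if_neg (show ¬((k:ℕ) = (j:ℕ)+1) from fun h2 => hij (Fin.ext (by omega))),
            star_zero, mul_zero]
        · rw [if_neg h1, zero_mul]
      have e2 : (∑ k : Fin N, star (if ((i:ℕ) = (k:ℕ)+1) then ((w ((k:ℕ)+1):ℝ):ℂ) else 0) *
          (if ((j:ℕ) = (k:ℕ)+1) then ((w ((k:ℕ)+1):ℝ):ℂ) else 0)) = 0 := by
        apply Finset.sum_eq_zero
        intro k _
        by_cases h1 : (i:ℕ) = (k:ℕ)+1
        · rw [if_neg (show ¬((j:ℕ) = (k:ℕ)+1) from fun h2 => hij (Fin.ext (by omega))),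
            mul_zero]
        · rw [if_neg h1, star_zero, zero_mul]
      rw [e1, e2]
      ring
end
end

section
/- For f(z)² = 1 − z⁴ and the matrices Z, W defined by Z_{kk} = (ħ/2)(N+1−2k) and W_{k,k+1} = w_k with w_k² = (ħ⁴/2)[(N+1)³k − 3(N+1)²k(k+1) + 2(N+1)k(k+1)(2k+1) − 2k²(k+1)²], X = (W+W†)/2, Y = (W−W†)/(2i), one has X² + Y² + Z⁴ + ħ²Z² = ħ⁴((N²−1)²/16)·1_N. In particular, if ħ = 2/√(N²−1), then X² + Y² + Z⁴ + ħ²Z² = 1_N. -/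
open Matrix
noncomputable section

/-! For any `W`, the "real and imaginary parts" `X = (W + W†)/2`, `Y = (W - W†)/(2i)` satisfy
`X² + Y² = (WW† + W†W)/2`. For the superdiagonal `W` with weights vanishing at both ends this is
diagonal, with `k`-th entry `(w_{k+1}² + w_k²)/2`, so the whole left-hand side is diagonal; the
weights are chosen precisely so that each diagonal entry collapses, by a polynomial identity in
`k`, to the constant `ħ⁴(N² - 1)²/16`. -/

theorem Fin.sum_ite_val_eq {M : Type*} [AddCommMonoid M] (N m : ℕ) (f : Fin N → M) :
    (∑ k : Fin N, if (k : ℕ) = m then f k else 0) = if h : m < N then f ⟨m, h⟩ else 0 := by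
  split_ifs with h
  · simp only [← Fin.ext_iff (b := ⟨m, h⟩)]
    exact Fintype.sum_ite_eq' _ f
  · exact Finset.sum_eq_zero fun k _ => if_neg (by omega)

-- Row `i` (0-based) carries `v (i + 1)`, so `v k` is the paper's `w_k` in 1-based indexing.
def superdiagonal {R : Type*} [Zero R] (N : ℕ) (v : ℕ → R) : Matrix (Fin N) (Fin N) R :=
  of fun i j => if (j : ℕ) = i + 1 then v (i + 1) else 0

section Superdiagonal

variable {R : Type*} [Semiring R] [StarRing R] {N : ℕ} {v : ℕ → R}

theorem superdiagonal_mul_conjTranspose (hv : v N = 0) :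
    superdiagonal N v * (superdiagonal N v)ᴴ =
      diagonal fun i : Fin N => v (i + 1) * star (v (i + 1)) := by
  ext i j
  simp only [superdiagonal, mul_apply, conjTranspose_apply, of_apply, apply_ite star, star_zero,
    mul_ite, ite_mul, zero_mul, mul_zero, Fin.sum_ite_val_eq]
  rcases eq_or_ne i j with rfl | hij
  · by_cases h : (i : ℕ) + 1 < N
    · simp [h]
    · simp [show (i : ℕ) + 1 = N by omega, hv]
  · rw [diagonal_apply_ne _ hij]
    simp [Fin.val_inj, hij.symm]

theorem conjTranspose_mul_superdiagonal (hv : v 0 = 0) :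
    (superdiagonal N v)ᴴ * superdiagonal N v = diagonal fun i : Fin N => star (v i) * v i := by
  ext i j
  simp only [superdiagonal, mul_apply, conjTranspose_apply, of_apply, apply_ite star, star_zero,
    mul_ite, ite_mul, zero_mul, mul_zero]
  by_cases hi : (i : ℕ) = 0
  · simp [diagonal_apply, hi, hv]
  obtain ⟨m, hm⟩ := Nat.exists_eq_add_one_of_ne_zero hi
  simp only [hm, Nat.add_right_cancel_iff, ← ite_and, and_comm (a := _ = _ + 1), eq_comm (a := m)]
  simp only [ite_and, Fin.sum_ite_val_eq, dif_pos (show m < N by omega), ← hm, Fin.val_inj,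
    diagonal_apply, eq_comm (a := j)]

end Superdiagonal

theorem smul_add_sq_add_smul_sub_sq {A : Type*} [Ring A] [Algebra ℂ A] (W V : A) :
    ((1 / 2 : ℂ) • (W + V)) ^ 2 + ((1 / (2 * Complex.I)) • (W - V)) ^ 2 =
      (1 / 2 : ℂ) • (W * V + V * W) := by
  have hI : (1 / (2 * Complex.I)) ^ 2 = -(1 / 4) := by
    field_simp; ring_nf; simp
  rw [smul_pow, smul_pow, hI]
  simp only [sq, add_mul, mul_add, sub_mul, mul_sub]
  module

def casimirWeightSq (n hbar k : ℝ) : ℝ :=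
  hbar ^ 4 / 2 * ((n + 1) ^ 3 * k - 3 * (n + 1) ^ 2 * k * (k + 1) +
    2 * (n + 1) * k * (k + 1) * (2 * k + 1) - 2 * k ^ 2 * (k + 1) ^ 2)

theorem casimirWeightSq_zero (n hbar : ℝ) : casimirWeightSq n hbar 0 = 0 := by
  simp [casimirWeightSq]

theorem casimirWeightSq_self (n hbar : ℝ) : casimirWeightSq n hbar n = 0 := by
  unfold casimirWeightSq; ring

theorem casimirWeightSq_add_one_add (n hbar k : ℝ) :
    (casimirWeightSq n hbar (k + 1) + casimirWeightSq n hbar k) / 2 +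
        (hbar / 2 * (n + 1 - 2 * (k + 1))) ^ 4 + hbar ^ 2 * (hbar / 2 * (n + 1 - 2 * (k + 1))) ^ 2 =
      hbar ^ 4 * (n ^ 2 - 1) ^ 2 / 16 := by
  unfold casimirWeightSq; ring

theorem pow_four_mul_sq_div_sixteen {s hbar : ℝ} (hpos : 0 < hbar) (hh : hbar = 2 / √s) :
    hbar ^ 4 * s ^ 2 / 16 = 1 := by
  have hsqrt : √s ≠ 0 := by rintro h; simp [h] at hh; linarith
  have hs : 0 < s := Real.sqrt_ne_zero'.mp hsqrt
  have hsq : hbar ^ 2 * s = 4 := by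
    rw [hh, div_pow, Real.sq_sqrt hs.le]; field_simp; norm_num
  linear_combination (hbar ^ 2 * s + 4) / 16 * hsq

theorem quartic_casimir_general (N : ℕ) (hbar : ℝ) (hpos : 0 < hbar)
    (w : ℕ → ℝ)
    (hw : ∀ k : ℕ, k ≤ N → w k ^ 2 =
      hbar ^ 4 / 2 * (((N : ℝ) + 1) ^ 3 * k - 3 * ((N : ℝ) + 1) ^ 2 * k * (k + 1) +
        2 * ((N : ℝ) + 1) * k * (k + 1) * (2 * k + 1) - 2 * k ^ 2 * (k + 1) ^ 2))
    (Z W X Y : Matrix (Fin N) (Fin N) ℂ)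
    (hZ : Z = Matrix.diagonal (fun i : Fin N =>
      ((hbar / 2 * ((N : ℝ) + 1 - 2 * ((i : ℕ) + 1)) : ℝ) : ℂ)))
    (hW : W = Matrix.of (fun i j : Fin N =>
      if (j : ℕ) = (i : ℕ) + 1 then ((w ((i : ℕ) + 1) : ℝ) : ℂ) else 0))
    (hX : X = (1 / 2 : ℂ) • (W + Wᴴ))
    (hY : Y = (1 / (2 * Complex.I)) • (W - Wᴴ)) :
    X ^ 2 + Y ^ 2 + Z ^ 4 + ((hbar : ℂ) ^ 2) • Z ^ 2 =
      ((hbar ^ 4 * ((N : ℝ) ^ 2 - 1) ^ 2 / 16 : ℝ) : ℂ) • (1 : Matrix (Fin N) (Fin N) ℂ) ∧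
    (hbar = 2 / Real.sqrt ((N : ℝ) ^ 2 - 1) →
      X ^ 2 + Y ^ 2 + Z ^ 4 + ((hbar : ℂ) ^ 2) • Z ^ 2 = (1 : Matrix (Fin N) (Fin N) ℂ)) := by
  replace hw : ∀ k : ℕ, k ≤ N → w k ^ 2 = casimirWeightSq N hbar k := hw
  have hw0 : ((w 0 : ℝ) : ℂ) = 0 := by
    simpa [casimirWeightSq_zero] using hw 0 N.zero_le
  have hwN : ((w N : ℝ) : ℂ) = 0 := by
    simpa [casimirWeightSq_self] using hw N le_rfl
  have key : X ^ 2 + Y ^ 2 + Z ^ 4 + ((hbar : ℂ) ^ 2) • Z ^ 2 =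
      ((hbar ^ 4 * ((N : ℝ) ^ 2 - 1) ^ 2 / 16 : ℝ) : ℂ) • (1 : Matrix (Fin N) (Fin N) ℂ) := by
    change W = superdiagonal N fun k => ((w k : ℝ) : ℂ) at hW
    rw [hX, hY, smul_add_sq_add_smul_sub_sq, hW, superdiagonal_mul_conjTranspose hwN,
      conjTranspose_mul_superdiagonal hw0, hZ, diagonal_pow, diagonal_pow, diagonal_add,
      ← diagonal_smul, ← diagonal_smul, diagonal_add, diagonal_add, smul_one_eq_diagonal]
    congr 1
    funext i
    have e1 : w (i + 1) ^ 2 = casimirWeightSq N hbar ((i : ℕ) + 1) := by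
      exact_mod_cast hw (i + 1) i.isLt
    have entry := casimirWeightSq_add_one_add N hbar i
    rw [← e1, ← hw i i.isLt.le] at entry
    have := congrArg ((↑) : ℝ → ℂ) entry
    simp only [Pi.smul_apply, Pi.pow_apply, smul_eq_mul, Complex.star_def, Complex.conj_ofReal]
    push_cast at this ⊢
    linear_combination this
  refine ⟨key, fun hh => ?_⟩
  rw [key, pow_four_mul_sq_div_sixteen hpos hh]
  simp

/-- for `f(z)² = 1 - z⁴` and the explicit representation matrices, one has
`X² + Y² + Z⁴ + ħ²Z² = ħ⁴((N²-1)²/16)·1`; in particular it equals `1` when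
`ħ = 2/√(N²-1)`. -/
theorem quartic_casimir (N : ℕ) (hbar : ℝ) (hpos : 0 < hbar)
    (w : ℕ → ℝ) (hwnn : ∀ k, 0 ≤ w k)
    (hw : ∀ k : ℕ, k ≤ N → w k ^ 2 =
      hbar ^ 4 / 2 * (((N : ℝ) + 1) ^ 3 * k - 3 * ((N : ℝ) + 1) ^ 2 * k * (k + 1) +
        2 * ((N : ℝ) + 1) * k * (k + 1) * (2 * k + 1) - 2 * k ^ 2 * (k + 1) ^ 2))
    (Z W X Y : Matrix (Fin N) (Fin N) ℂ)
    (hZ : Z = Matrix.diagonal (fun i : Fin N =>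
      ((hbar / 2 * ((N : ℝ) + 1 - 2 * ((i : ℕ) + 1)) : ℝ) : ℂ)))
    (hW : W = Matrix.of (fun i j : Fin N =>
      if (j : ℕ) = (i : ℕ) + 1 then ((w ((i : ℕ) + 1) : ℝ) : ℂ) else 0))
    (hX : X = (1 / 2 : ℂ) • (W + Wᴴ))
    (hY : Y = (1 / (2 * Complex.I)) • (W - Wᴴ)) :
    X ^ 2 + Y ^ 2 + Z ^ 4 + ((hbar : ℂ) ^ 2) • Z ^ 2 =
      ((hbar ^ 4 * ((N : ℝ) ^ 2 - 1) ^ 2 / 16 : ℝ) : ℂ) • (1 : Matrix (Fin N) (Fin N) ℂ) ∧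
    (hbar = 2 / Real.sqrt ((N : ℝ) ^ 2 - 1) →
      X ^ 2 + Y ^ 2 + Z ^ 4 + ((hbar : ℂ) ^ 2) • Z ^ 2 = (1 : Matrix (Fin N) (Fin N) ℂ)) :=
  quartic_casimir_general N hbar hpos w hw Z W X Y hZ hW hX hY
end
end

section
/- In the setting of the previous example (f(z)² = 1 − z⁴), the matrix Q = X² + Y² + Z⁴ + ħ²Z² commutes with W: equivalently [X² + Y² + Z⁴, W] = ħ²[W, Z²] = −ħ²[Z², W]. -/
open Matrix
noncomputable section

private lemma fin_sum_ite {N : ℕ} (a : Fin N → ℂ) (m : ℕ) :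
    (∑ k : Fin N, if (k : ℕ) = m then a k else 0)
      = if hm : m < N then a ⟨m, hm⟩ else 0 := by
  split_ifs with hm
  · rw [Finset.sum_eq_single (⟨m, hm⟩ : Fin N)]
    · simp
    · intro k _ hk
      rw [if_neg]
      intro h; exact hk (Fin.ext h)
    · simp
  · apply Finset.sum_eq_zero
    intro k _
    rw [if_neg]
    intro h
    exact hm (h ▸ k.isLt)

private lemma fin_sum_ite_pred {N : ℕ} (a : Fin N → ℂ) (m : ℕ) :
    (∑ k : Fin N, if m = (k : ℕ) + 1 then a k else 0)
      = if hm : 1 ≤ m ∧ m ≤ N then a ⟨m - 1, by omega⟩ else 0 := by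
  split_ifs with hm
  · rw [Finset.sum_eq_single (⟨m - 1, by omega⟩ : Fin N)]
    · rw [if_pos (by simp only [Fin.val_mk]; omega)]
    · intro k _ hk
      rw [if_neg]
      intro h
      exact hk (Fin.ext (by simp only [Fin.val_mk]; omega))
    · simp
  · apply Finset.sum_eq_zero
    intro k _
    rw [if_neg]
    intro h
    have := k.isLt
    omega

/-- for `f(z)² = 1 - z⁴` (so `ff'(z) = -2z³`), the quantum Casimir
`Q = X² + Y² + Z⁴ + ħ²Z²` commutes with `W`; equivalently
`[X² + Y² + Z⁴, W] = ħ²[W, Z²] = -ħ²[Z², W]`. -/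
theorem quartic_casimir_commutes (N : ℕ) (hbar : ℝ) (hpos : 0 < hbar)
    (w : ℕ → ℝ) (hwnn : ∀ k, 0 ≤ w k) (hw0 : w 0 = 0) (hwN : w N = 0)
    (hrec : ∀ k : ℕ, 1 ≤ k → k ≤ N →
      w k ^ 2 - w (k - 1) ^ 2 =
        -2 * hbar * (-2 * (hbar / 2 * ((N : ℝ) + 1 - 2 * k)) ^ 3))
    (Z W X Y : Matrix (Fin N) (Fin N) ℂ)
    (hZ : Z = Matrix.diagonal (fun i : Fin N =>
      ((hbar / 2 * ((N : ℝ) + 1 - 2 * ((i : ℕ) + 1)) : ℝ) : ℂ)))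
    (hW : W = Matrix.of (fun i j : Fin N =>
      if (j : ℕ) = (i : ℕ) + 1 then ((w ((i : ℕ) + 1) : ℝ) : ℂ) else 0))
    (hX : X = (1 / 2 : ℂ) • (W + Wᴴ))
    (hY : Y = (1 / (2 * Complex.I)) • (W - Wᴴ)) :
    ⁅X ^ 2 + Y ^ 2 + Z ^ 4, W⁆ = ((hbar : ℂ) ^ 2) • ⁅W, Z ^ 2⁆ ∧
    ((hbar : ℂ) ^ 2) • ⁅W, Z ^ 2⁆ = -(((hbar : ℂ) ^ 2) • ⁅Z ^ 2, W⁆) := by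
  constructor
  · -- conjugate transpose of W
    have hWH : Wᴴ = Matrix.of (fun i j : Fin N =>
        if (i : ℕ) = (j : ℕ) + 1 then ((w ((j : ℕ) + 1) : ℝ) : ℂ) else 0) := by
      subst hW
      ext i j
      simp [conjTranspose_apply, apply_ite (starRingEnd ℂ), Complex.conj_ofReal]
    -- W * Wᴴ is diagonal
    have hWWH : W * Wᴴ = Matrix.diagonal
        (fun i : Fin N => ((w ((i : ℕ) + 1) : ℝ) : ℂ) ^ 2) := by
      rw [hWH]; subst hW
      ext i j
      rw [Matrix.mul_apply]
      simp only [Matrix.of_apply]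
      simp only [ite_mul, zero_mul, mul_ite, mul_zero]
      rw [fin_sum_ite]
      simp only [Fin.val_mk]
      simp only [Matrix.diagonal_apply, Fin.ext_iff]
      have hiv := i.isLt
      have hjv := j.isLt
      split_ifs with h1 h2 h3 h4 h5
      · rw [show (j : ℕ) = (i : ℕ) from by omega]; ring
      · exfalso; omega
      · exfalso; omega
      · rfl
      · rw [show (i : ℕ) + 1 = N from by omega, hwN]; norm_num
      · rfl
    -- Wᴴ * W is diagonal
    have hWHW : Wᴴ * W = Matrix.diagonal
        (fun i : Fin N => ((w (i : ℕ) : ℝ) : ℂ) ^ 2) := by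
      rw [hWH]; subst hW
      ext i j
      rw [Matrix.mul_apply]
      simp only [Matrix.of_apply]
      simp only [ite_mul, zero_mul, mul_ite, mul_zero]
      rw [fin_sum_ite_pred]
      simp only [Fin.val_mk]
      simp only [Matrix.diagonal_apply, Fin.ext_iff]
      have hiv := i.isLt
      have hjv := j.isLt
      split_ifs with h1 h2 h3 h4 h5
      · rw [show (j : ℕ) - 1 + 1 = (i : ℕ) from by omega]; ring
      · exfalso; omega
      · exfalso; omega
      · rfl
      · rw [show (i : ℕ) = 0 from by omega, hw0]; norm_num
      · rfl
    -- X² + Y² = (1/2)(WWᴴ + WᴴW)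
    have hXY : X ^ 2 + Y ^ 2 = (2⁻¹ : ℂ) • (W * Wᴴ + Wᴴ * W) := by
      subst hX hY
      rw [smul_pow, smul_pow]; simp only [pow_two]
      have e1 : (W + Wᴴ) * (W + Wᴴ) = W * W + W * Wᴴ + Wᴴ * W + Wᴴ * Wᴴ := by
        noncomm_ring
      have e2 : (W - Wᴴ) * (W - Wᴴ) = W * W - W * Wᴴ - Wᴴ * W + Wᴴ * Wᴴ := by
        noncomm_ring
      rw [e1, e2]
      have c2 : (1 / (2 * Complex.I) : ℂ) * (1 / (2 * Complex.I)) = -(4⁻¹) := by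
        rw [div_mul_div_comm, one_mul, mul_mul_mul_comm, Complex.I_mul_I]
        norm_num
      rw [c2]
      match_scalars <;> ring
    rw [hXY, hWWH, hWHW, hZ, hW]
    rw [Matrix.diagonal_pow, Matrix.diagonal_pow]
    simp only [Ring.lie_def, Matrix.add_mul, Matrix.mul_add, smul_mul_assoc,
      mul_smul_comm]
    ext i j
    simp only [Matrix.sub_apply, Matrix.add_apply, Matrix.smul_apply,
      Matrix.diagonal_mul, Matrix.mul_diagonal, Matrix.of_apply,
      Pi.pow_apply, smul_eq_mul]
    by_cases hij : (j : ℕ) = (i : ℕ) + 1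
    · simp only [if_pos hij]
      have hjN := j.isLt
      have h1 := hrec ((i : ℕ) + 1) (by omega) (by omega)
      have h2 := hrec ((i : ℕ) + 1 + 1) (by omega) (by omega)
      simp only [Nat.add_sub_cancel] at h1 h2
      have h1C := congrArg (Complex.ofReal) h1
      have h2C := congrArg (Complex.ofReal) h2
      push_cast at h1C h2C ⊢
      rw [hij]
      push_cast
      linear_combination (-((w ((i : ℕ) + 1) : ℝ) : ℂ) / 2) * h1C
        + (-((w ((i : ℕ) + 1) : ℝ) : ℂ) / 2) * h2C
    · simp only [if_neg hij]
      ring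
  · rw [Ring.lie_def, Ring.lie_def, ← smul_neg, neg_sub]
end
end
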